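/- arXiv:2204.10313 — 2 statements merged into one kernel-verified Lean document; each statement's English description precedes it below -/
import Mathlib

section
/- Fix n ∈ {1,…,N}. Regard S_0(x) as a function of the n-th metric matrix D_n (all sites, all other matrices, the evaluation point x, and ε_s ≥ 0 being fixed). If D_nᵀ(x − x_n) ≠ 0, then this function is differentiable at D_n and its Fréchet derivative in the matrix direction H equals S_0(x)·S_n(x)·(vᵀ H D_nᵀ v)/d_n(x, x_n) with v = x − x_n; equivalently, the gradient matrix is S_0(x)·S_n(x)·d_n(x, x_n)·(X_n ⊗ X_n) D_n with X_n = (x_n − x)/d_n(x, x_n). -/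
open Matrix

/-- The anisotropic (Mahalanobis-type) length `sqrt(uᵀ A u)`. -/
noncomputable def mdist {d : ℕ} (A : Matrix (Fin d) (Fin d) ℝ) (u : Fin d → ℝ) : ℝ :=
  Real.sqrt (u ⬝ᵥ A.mulVec u)

/-- The denominator `ε_s + ∑_{k=1}^N exp(−d_k(x, x_k))` with `A_k = D_k D_kᵀ`. -/
noncomputable def Sden {d N : ℕ} (p : Fin N → Fin d → ℝ)
    (D : Fin N → Matrix (Fin d) (Fin d) ℝ) (ε : ℝ) (x : Fin d → ℝ) : ℝ :=
  ε + ∑ k, Real.exp (-(mdist (D k * (D k)ᵀ) (x - p k)))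

/-- `S_m(x) = exp(−d_m(x, x_m)) / (ε_s + ∑_k exp(−d_k(x, x_k)))` for `m = 1,…,N`. -/
noncomputable def S {d N : ℕ} (p : Fin N → Fin d → ℝ)
    (D : Fin N → Matrix (Fin d) (Fin d) ℝ) (ε : ℝ) (x : Fin d → ℝ) (m : Fin N) : ℝ :=
  Real.exp (-(mdist (D m * (D m)ᵀ) (x - p m))) / Sden p D ε x

/-- `S_0(x) = ε_s / (ε_s + ∑_k exp(−d_k(x, x_k)))`. -/
noncomputable def S0 {d N : ℕ} (p : Fin N → Fin d → ℝ)
    (D : Fin N → Matrix (Fin d) (Fin d) ℝ) (ε : ℝ) (x : Fin d → ℝ) : ℝ :=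
  ε / Sden p D ε x

/-! With `v = x − x_n` one has `d_n(x, x_n) = ‖D_nᵀ v‖₂`, so as a function of the matrix `M`
the distance is the Euclidean norm of the linear map `M ↦ Mᵀ v`; where `Mᵀ v ≠ 0` it is
differentiable with derivative `H ↦ ⟪D_nᵀ v, Hᵀ v⟫ / d_n = vᵀ H D_nᵀ v / d_n`. Only the `n`-th
summand of the denominator depends on `D_n`, so `S_0 = ε / (c + exp (−d_n))` with `c` constant,
and the chain rule produces the factor `ε exp (−d_n) / (c + exp (−d_n))² = S_0 S_n`. -/

open scoped RealInnerProductSpace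

theorem dotProduct_mul_transpose_mulVec {R m n : Type*} [Fintype m] [Fintype n] [CommSemiring R]
    (v : m → R) (A B : Matrix m n R) : v ⬝ᵥ (A * Bᵀ) *ᵥ v = (Aᵀ *ᵥ v) ⬝ᵥ (Bᵀ *ᵥ v) := by
  rw [← mulVec_mulVec, dotProduct_mulVec, mulVec_transpose, mulVec_transpose]

theorem HasFDerivAt.norm {E F : Type*} [NormedAddCommGroup E] [NormedSpace ℝ E]
    [NormedAddCommGroup F] [InnerProductSpace ℝ F] {f : E → F} {f' : E →L[ℝ] F} {x : E}
    (hf : HasFDerivAt f f' x) (h0 : f x ≠ 0) :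
    HasFDerivAt (fun y => ‖f y‖) (‖f x‖⁻¹ • (innerSL ℝ (f x)).comp f') x := by
  have hsq : (fun y => ‖f y‖) = fun y => √(‖f y‖ ^ 2) := by
    funext y; rw [Real.sqrt_sq (norm_nonneg _)]
  rw [hsq]
  convert hf.norm_sq.sqrt (pow_ne_zero 2 (norm_ne_zero_iff.mpr h0)) using 1
  rw [Real.sqrt_sq (norm_nonneg _), two_smul, ← two_smul ℝ, smul_smul]
  congr 1
  field_simp

theorem hasDerivAt_const_div_const_add_exp_neg {ε c t : ℝ} (h : c + Real.exp (-t) ≠ 0) :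
    HasDerivAt (fun s => ε / (c + Real.exp (-s)))
      (ε * Real.exp (-t) / (c + Real.exp (-t)) ^ 2) t := by
  refine ((hasDerivAt_const t ε).fun_div ((hasDerivAt_neg' t).exp.const_add c) h).congr_deriv ?_
  ring

section

variable {d : ℕ} {ι : Type*} [Fintype ι]

theorem mdist_mul_transpose (B : Matrix (Fin d) ι ℝ) (u : Fin d → ℝ) :
    mdist (B * Bᵀ) u = ‖WithLp.toLp 2 (Bᵀ *ᵥ u)‖ := by
  rw [mdist, dotProduct_mul_transpose_mulVec, norm_eq_sqrt_real_inner,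
    EuclideanSpace.inner_toLp_toLp, star_trivial]

noncomputable def transposeMulVecCLM (u : Fin d → ℝ) :
    (Fin d → ι → ℝ) →L[ℝ] EuclideanSpace ℝ ι :=
  LinearMap.toContinuousLinearMap
    { toFun := fun M => WithLp.toLp 2 ((of M)ᵀ *ᵥ u)
      map_add' := fun M N => by rw [← WithLp.toLp_add, ← of_add_of, transpose_add, add_mulVec]
      map_smul' := fun c M => by
        rw [RingHom.id_apply, ← WithLp.toLp_smul, ← smul_of, transpose_smul, smul_mulVec] }

@[simp]
theorem transposeMulVecCLM_apply (u : Fin d → ℝ) (M : Fin d → ι → ℝ) :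
    transposeMulVecCLM u M = WithLp.toLp 2 ((of M)ᵀ *ᵥ u) := rfl

theorem inner_transposeMulVecCLM (u : Fin d → ℝ) (B H : Fin d → ι → ℝ) :
    ⟪transposeMulVecCLM u B, transposeMulVecCLM u H⟫ = u ⬝ᵥ (of H * (of B)ᵀ) *ᵥ u := by
  rw [dotProduct_mul_transpose_mulVec, transposeMulVecCLM_apply, transposeMulVecCLM_apply,
    EuclideanSpace.inner_toLp_toLp, star_trivial]

theorem hasFDerivAt_mdist_mul_transpose {u : Fin d → ℝ} {B : Fin d → ι → ℝ}
    (h : (of B)ᵀ *ᵥ u ≠ 0) :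
    HasFDerivAt (fun M : Fin d → ι → ℝ => mdist (of M * (of M)ᵀ) u)
      ((mdist (of B * (of B)ᵀ) u)⁻¹ •
        (innerSL ℝ (transposeMulVecCLM u B)).comp (transposeMulVecCLM u)) B := by
  simp only [mdist_mul_transpose]
  exact (transposeMulVecCLM u).hasFDerivAt.norm (by simpa using h)

end

theorem Sden_update {d N : ℕ} (p : Fin N → Fin d → ℝ) (D : Fin N → Matrix (Fin d) (Fin d) ℝ)
    (ε : ℝ) (x : Fin d → ℝ) (n : Fin N) (A : Matrix (Fin d) (Fin d) ℝ) :
    Sden p (Function.update D n A) ε x =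
      Sden p D ε x - Real.exp (-(mdist (D n * (D n)ᵀ) (x - p n)))
        + Real.exp (-(mdist (A * Aᵀ) (x - p n))) := by
  simp only [Sden, ← Finset.add_sum_erase _ _ (Finset.mem_univ n), Function.update_self]
  rw [Finset.sum_congr rfl fun k hk => by rw [Function.update_of_ne (Finset.ne_of_mem_erase hk)]]
  ring

theorem Sden_pos {d N : ℕ} [Nonempty (Fin N)] (p : Fin N → Fin d → ℝ)
    (D : Fin N → Matrix (Fin d) (Fin d) ℝ) {ε : ℝ} (hε : 0 ≤ ε) (x : Fin d → ℝ) :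
    0 < Sden p D ε x :=
  add_pos_of_nonneg_of_pos hε (Finset.sum_pos (fun _ _ => Real.exp_pos _) Finset.univ_nonempty)

/-- Regarding `S_0(x)` as a function of the `n`-th metric matrix `D_n` (all other data
fixed; matrices encoded as `Fin d → Fin d → ℝ`, carrying the Frobenius pairing in the
direction `H`), if `D_nᵀ(x − x_n) ≠ 0` then it is differentiable at `D_n` and its
Fréchet derivative in the direction `H` equals
`S_0(x)·S_n(x)·(vᵀ H D_nᵀ v)/d_n(x, x_n)` with `v = x − x_n`; equivalently the
gradient matrix is `S_0(x)·S_n(x)·d_n(x, x_n)·(X_n ⊗ X_n) D_n`. -/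
theorem S0_differentiableAt_metric {d N : ℕ} (p : Fin N → Fin d → ℝ)
    (D : Fin N → Matrix (Fin d) (Fin d) ℝ)
    (ε : ℝ) (hε : 0 ≤ ε) (x : Fin d → ℝ) (n : Fin N)
    (h : (D n)ᵀ.mulVec (x - p n) ≠ 0) :
    DifferentiableAt ℝ
        (fun M : Fin d → Fin d → ℝ =>
          S0 p (Function.update D n (Matrix.of M)) ε x) (D n) ∧
      ∀ H : Fin d → Fin d → ℝ,
        fderiv ℝ (fun M : Fin d → Fin d → ℝ =>
            S0 p (Function.update D n (Matrix.of M)) ε x) (D n) H =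
          S0 p D ε x * S p D ε x n *
            ((x - p n) ⬝ᵥ (Matrix.of H * (D n)ᵀ).mulVec (x - p n)) /
              mdist (D n * (D n)ᵀ) (x - p n) := by
  have : Nonempty (Fin N) := ⟨n⟩
  have hfun : (fun M : Fin d → Fin d → ℝ => S0 p (Function.update D n (of M)) ε x) = fun M =>
      ε / (Sden p D ε x - Real.exp (-(mdist (D n * (D n)ᵀ) (x - p n)))
        + Real.exp (-(mdist (of M * (of M)ᵀ) (x - p n)))) := by
    funext M; rw [S0, Sden_update]
  have hD : of (D n) = D n := rfl
  have hderiv := (hasDerivAt_const_div_const_add_exp_neg (ε := ε)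
    (by rw [sub_add_cancel]; exact (Sden_pos p D hε x).ne')).comp_hasFDerivAt _
      (hasFDerivAt_mdist_mul_transpose (B := D n) h)
  simp only [Function.comp_def, hD, sub_add_cancel] at hderiv
  rw [hfun]
  refine ⟨hderiv.differentiableAt, fun H => ?_⟩
  rw [hderiv.fderiv, _root_.smul_apply, _root_.smul_apply, ContinuousLinearMap.comp_apply,
    innerSL_apply_apply, inner_transposeMulVecCLM _ (D n) H, hD, S0, S, smul_eq_mul, smul_eq_mul]
  ring
end

section
/- Fix n ∈ {1,…,N} and a natural number β ≥ 1. Regard the density ρ(x) = 1 − Σ_{m=0}^N S_m(x)^β as a function of the n-th site point x_n (all other data fixed). If x ≠ x_n, then this function is differentiable at x_n and its gradient equals −β·[S_0(x)^{β−1}·S_0(x)·S_n(x) + Σ_{m=1}^N S_m(x)^{β−1}·S_m(x)·(S_n(x) − δ_{mn})]·Y_n(x), where Y_n(x) = A_n(x_n − x)/d_n(x, x_n); that is, ∂ρ/∂x_n = −Σ_{m=0}^N β S_m(x)^{β−1} ∂S_m/∂x_n with ∂S_m/∂x_n = S_m(S_n − δ_{mn})Y_n for m ≥ 1 and ∂S_0/∂x_n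 = S_0 S_n Y_n. -/
/-! Only the weight `exp (-d_n(x, x_n))` depends on `x_n`, so `ρ` factors through the scalar
`s = d_n(x, x_n)`. As functions of this log-weight the normalized weights have the softmax
derivatives `∂S_m/∂s = S_m (S_n - δ_{mn})` and `∂S_0/∂s = S_0 S_n`, while the gradient of
`q ↦ d_n(x, q)` at `x_n` is `Y_n`; it exists because `A_n = D_n D_nᵀ` is positive definite
and `x ≠ x_n`, so the square root is taken away from `0`. -/

open Matrix

/-- The density `ρ(x) = 1 − ∑_{m=0}^N S_m(x)^β`. -/
noncomputable def rho {d N : ℕ} (β : ℕ) (p : Fin N → Fin d → ℝ)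
    (D : Fin N → Matrix (Fin d) (Fin d) ℝ) (ε : ℝ) (x : Fin d → ℝ) : ℝ :=
  1 - (S0 p D ε x ^ β + ∑ m, S p D ε x m ^ β)

open Function

section DotProduct

variable {ι : Type*} [Fintype ι]

noncomputable def dotProductCLM : (ι → ℝ) →L[ℝ] (ι → ℝ) →L[ℝ] ℝ :=
  LinearMap.toContinuousLinearMap
    (LinearMap.toContinuousLinearMap.toLinearMap ∘ₗ dotProductBilin ℝ ℝ)

@[simp]
lemma dotProductCLM_apply (u v : ι → ℝ) : dotProductCLM u v = u ⬝ᵥ v := rfl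

lemma hasFDerivAt_dotProduct_mulVec_self (A : Matrix ι ι ℝ) (u : ι → ℝ) :
    HasFDerivAt (fun v => v ⬝ᵥ A *ᵥ v) (dotProductCLM ((A + Aᵀ) *ᵥ u)) u := by
  refine (dotProductCLM.hasFDerivAt_of_bilinear (hasFDerivAt_id u)
    A.mulVecLin.toContinuousLinearMap.hasFDerivAt).congr_fderiv ?_
  ext w
  simp [add_mulVec, dotProduct_mulVec, vecMul_transpose, dotProduct_comm, add_comm]

end DotProduct

section Mdist

variable {d : ℕ}

lemma mdist_neg (A : Matrix (Fin d) (Fin d) ℝ) (u : Fin d → ℝ) :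
    mdist A (-u) = mdist A u := by
  simp [mdist, mulVec_neg]

lemma hasFDerivAt_mdist {A : Matrix (Fin d) (Fin d) ℝ} (hA : A.PosDef) {u : Fin d → ℝ}
    (hu : u ≠ 0) : HasFDerivAt (mdist A) (dotProductCLM ((mdist A u)⁻¹ • A *ᵥ u)) u := by
  have hAt : Aᵀ = A := by simpa using hA.1.eq
  have hQ : 0 < u ⬝ᵥ A *ᵥ u := by simpa using hA.dotProduct_mulVec_pos hu
  refine ((hasFDerivAt_dotProduct_mulVec_self A u).sqrt hQ.ne').congr_fderiv ?_
  ext w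
  simp only [one_div, _root_.mul_inv_rev, hAt, add_mulVec, map_add, smul_add, _root_.add_apply,
    _root_.smul_apply, dotProductCLM_apply, smul_eq_mul, mdist, map_smul]
  ring

lemma hasFDerivAt_mdist_sub {A : Matrix (Fin d) (Fin d) ℝ} (hA : A.PosDef) {x p : Fin d → ℝ}
    (hxp : x ≠ p) :
    HasFDerivAt (fun q => mdist A (x - q))
      (dotProductCLM ((mdist A (x - p))⁻¹ • A *ᵥ (p - x))) p := by
  have h := (hasFDerivAt_mdist hA (sub_ne_zero.2 hxp.symm)).comp p ((hasFDerivAt_id p).sub_const x)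
  rw [ContinuousLinearMap.comp_id] at h
  have hfun : (fun q => mdist A (x - q)) = mdist A ∘ fun q => id q - x :=
    funext fun q => by simp [← mdist_neg A (x - q)]
  rwa [hfun, ← mdist_neg A (x - p), neg_sub]

end Mdist

section Weights

variable {ι : Type*}

lemma hasDerivAt_update_apply {𝕜 : Type*} [NontriviallyNormedField 𝕜] [DecidableEq ι]
    (e : ι → 𝕜) (n m : ι) :
    HasDerivAt (fun t => update e n t m) (if m = n then 1 else 0) (e n) := by
  simpa [Pi.single_apply] using hasDerivAt_pi.1 (hasDerivAt_update e n (e n)) m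

variable [Fintype ι]

noncomputable def totalWeight (ε : ℝ) (e : ι → ℝ) : ℝ := ε + ∑ k, e k

noncomputable def normalizedWeight (ε : ℝ) (e : ι → ℝ) (m : ι) : ℝ :=
  e m / totalWeight ε e

noncomputable def normalizedOffset (ε : ℝ) (e : ι → ℝ) : ℝ := ε / totalWeight ε e

noncomputable def densityOfWeights (β : ℕ) (ε : ℝ) (e : ι → ℝ) : ℝ :=
  1 - (normalizedOffset ε e ^ β + ∑ m, normalizedWeight ε e m ^ β)

variable [DecidableEq ι] (ε : ℝ) (e : ι → ℝ) (n : ι)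

lemma hasDerivAt_totalWeight_update :
    HasDerivAt (fun t => totalWeight ε (update e n t)) 1 (e n) := by
  have h := (HasDerivAt.fun_sum (u := Finset.univ) fun m _ =>
    hasDerivAt_update_apply e n m).const_add ε
  simpa [totalWeight] using h

variable {ε e}

lemma hasDerivAt_normalizedWeight_update (hσ : totalWeight ε e ≠ 0) (m : ι) :
    HasDerivAt (fun t => normalizedWeight ε (update e n t) m)
      (((if m = n then 1 else 0) - normalizedWeight ε e m) / totalWeight ε e) (e n) := by
  have h := (hasDerivAt_update_apply e n m).div (hasDerivAt_totalWeight_update ε e n)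
    (by simpa using hσ)
  refine h.congr_deriv ?_
  simp only [update_eq_self, normalizedWeight]
  field_simp

lemma hasDerivAt_normalizedOffset_update (hσ : totalWeight ε e ≠ 0) :
    HasDerivAt (fun t => normalizedOffset ε (update e n t))
      (-normalizedOffset ε e / totalWeight ε e) (e n) := by
  have h := (hasDerivAt_totalWeight_update ε e n).inv (by simpa using hσ) |>.const_mul ε
  refine h.congr_deriv ?_
  simp only [update_eq_self, normalizedOffset]
  field_simp

variable {n} {s : ℝ}

lemma hasDerivAt_normalizedWeight_update_exp_neg (hσ : totalWeight ε e ≠ 0)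
    (hs : e n = Real.exp (-s)) (m : ι) :
    HasDerivAt (fun s => normalizedWeight ε (update e n (Real.exp (-s))) m)
      (normalizedWeight ε e m * (normalizedWeight ε e n - if m = n then 1 else 0)) s := by
  refine ((hasDerivAt_normalizedWeight_update n hσ m).comp_of_eq s
    (hasDerivAt_neg s).exp hs).congr_deriv ?_
  rw [← hs]
  split_ifs with hmn <;> simp only [normalizedWeight, hmn] <;> field_simp <;> ring

lemma hasDerivAt_normalizedOffset_update_exp_neg (hσ : totalWeight ε e ≠ 0)
    (hs : e n = Real.exp (-s)) :
    HasDerivAt (fun s => normalizedOffset ε (update e n (Real.exp (-s))))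
      (normalizedOffset ε e * normalizedWeight ε e n) s := by
  refine ((hasDerivAt_normalizedOffset_update n hσ).comp_of_eq s
    (hasDerivAt_neg s).exp hs).congr_deriv ?_
  rw [← hs]
  simp only [normalizedWeight]
  field_simp

lemma hasDerivAt_densityOfWeights_update_exp_neg (β : ℕ) (hσ : totalWeight ε e ≠ 0)
    (hs : e n = Real.exp (-s)) :
    HasDerivAt (fun s => densityOfWeights β ε (update e n (Real.exp (-s))))
      (-β * (normalizedOffset ε e ^ (β - 1) * (normalizedOffset ε e * normalizedWeight ε e n) +
        ∑ m, normalizedWeight ε e m ^ (β - 1) *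
          (normalizedWeight ε e m * (normalizedWeight ε e n - if m = n then 1 else 0)))) s := by
  have h0 := (hasDerivAt_normalizedOffset_update_exp_neg hσ hs).pow β
  have hm := fun m => (hasDerivAt_normalizedWeight_update_exp_neg hσ hs m).pow β
  simp only [← hs, update_eq_self] at h0 hm
  refine ((h0.add (HasDerivAt.fun_sum fun m _ => hm m)).const_sub 1).congr_deriv ?_
  rw [neg_mul, mul_add, Finset.mul_sum]
  simp only [mul_assoc]

end Weights

section Sites

variable {d N : ℕ} (p : Fin N → Fin d → ℝ) (D : Fin N → Matrix (Fin d) (Fin d) ℝ)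
  (x : Fin d → ℝ)

noncomputable def siteWeight (k : Fin N) : ℝ :=
  Real.exp (-(mdist (D k * (D k)ᵀ) (x - p k)))

lemma siteWeight_update (n : Fin N) (q : Fin d → ℝ) :
    siteWeight (update p n q) D x =
      update (siteWeight p D x) n (Real.exp (-(mdist (D n * (D n)ᵀ) (x - q)))) :=
  funext (apply_update (fun k pk => Real.exp (-(mdist (D k * (D k)ᵀ) (x - pk)))) p n q)

lemma rho_update_eq_comp (β : ℕ) (ε : ℝ) (n : Fin N) :
    (fun q => rho β (update p n q) D ε x) =
      (fun s => densityOfWeights β ε (update (siteWeight p D x) n (Real.exp (-s)))) ∘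
        fun q => mdist (D n * (D n)ᵀ) (x - q) :=
  funext fun q => congrArg (densityOfWeights β ε) (siteWeight_update p D x n q)

end Sites

theorem rho_differentiableAt_site_general {d N : ℕ} (β : ℕ)
    (p : Fin N → Fin d → ℝ)
    (D : Fin N → Matrix (Fin d) (Fin d) ℝ) (hD : ∀ k, IsUnit (D k))
    (ε : ℝ) (hε : 0 ≤ ε) (x : Fin d → ℝ) (n : Fin N) (hx : x ≠ p n) :
    DifferentiableAt ℝ (fun q => rho β (Function.update p n q) D ε x) (p n) ∧
      ∀ w : Fin d → ℝ,
        fderiv ℝ (fun q => rho β (Function.update p n q) D ε x) (p n) w =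
          -(β : ℝ) *
            (S0 p D ε x ^ (β - 1) * (S0 p D ε x * S p D ε x n) +
              ∑ m, S p D ε x m ^ (β - 1) *
                (S p D ε x m * (S p D ε x n - if m = n then 1 else 0))) *
            (((mdist (D n * (D n)ᵀ) (x - p n))⁻¹ •
              (D n * (D n)ᵀ).mulVec (p n - x)) ⬝ᵥ w) := by
  have hA : (D n * (D n)ᵀ).PosDef := by
    simpa using PosDef.mul_conjTranspose_self (D n) (vecMul_injective_iff_isUnit.2 (hD n))
  have hσ : totalWeight ε (siteWeight p D x) ≠ 0 :=
    (add_pos_of_nonneg_of_pos hε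
      (Finset.sum_pos (fun k _ => Real.exp_pos _) ⟨n, Finset.mem_univ n⟩)).ne'
  have hρ := (hasDerivAt_densityOfWeights_update_exp_neg β hσ rfl).comp_hasFDerivAt (p n)
    (hasFDerivAt_mdist_sub hA hx)
  rw [← rho_update_eq_comp] at hρ
  refine ⟨hρ.differentiableAt, fun w => ?_⟩
  rw [hρ.fderiv]
  -- `S0`, `S`, `Sden` are `normalizedOffset`, `normalizedWeight`, `totalWeight` of `siteWeight`
  rfl

/-- Regarding `ρ(x) = 1 − ∑_{m=0}^N S_m(x)^β` as a function of the `n`-th site point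
`x_n`, if `x ≠ x_n` then it is differentiable at `x_n` with gradient
`−β·[S_0^{β−1}·S_0·S_n + ∑_{m=1}^N S_m^{β−1}·S_m·(S_n − δ_{mn})]·Y_n(x)`,
where `Y_n(x) = A_n(x_n − x)/d_n(x, x_n)` (the gradient being expressed through the
Fréchet derivative `w ↦ ⟨grad, w⟩`). -/
theorem rho_differentiableAt_site {d N : ℕ} (β : ℕ) (hβ : 1 ≤ β)
    (p : Fin N → Fin d → ℝ)
    (D : Fin N → Matrix (Fin d) (Fin d) ℝ) (hD : ∀ k, IsUnit (D k))
    (ε : ℝ) (hε : 0 ≤ ε) (x : Fin d → ℝ) (n : Fin N) (hx : x ≠ p n) :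
    DifferentiableAt ℝ (fun q => rho β (Function.update p n q) D ε x) (p n) ∧
      ∀ w : Fin d → ℝ,
        fderiv ℝ (fun q => rho β (Function.update p n q) D ε x) (p n) w =
          -(β : ℝ) *
            (S0 p D ε x ^ (β - 1) * (S0 p D ε x * S p D ε x n) +
              ∑ m, S p D ε x m ^ (β - 1) *
                (S p D ε x m * (S p D ε x n - if m = n then 1 else 0))) *
            (((mdist (D n * (D n)ᵀ) (x - p n))⁻¹ •
              (D n * (D n)ᵀ).mulVec (p n - x)) ⬝ᵥ w) :=
  rho_differentiableAt_site_general β p D hD ε hε x n hx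
end
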